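/- arXiv:2105.14618 — 2 statements merged into one kernel-verified Lean document; each statement's English description precedes it below -/
import Mathlib

section
/- Let ℓ ≥ 2 and m ≥ 1 be integers, let u ∈ ℝ^m be a nonzero vector, and let (P_{k,j})_{k ∈ Fin ℓ, j ∈ Fin m} be mutually independent real-valued random variables, each distributed according to the Gaussian measure with mean 0 and variance 2. Define e_k := ∑_{j=1}^{m} P_{k,j} · u_j and ĥ := ( ∏_{k=1}^{ℓ} |e_k|^{2/ℓ} ) / ( (2/π) Γ(2/ℓ) Γ(1 − 1/ℓ) sin(π/ℓ) )^{ℓ}. Then E[ĥ] = ‖u‖₂², where ‖u‖₂² = ∑_j u_j². -/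
/-!
Each coordinate `e k = ∑ j, P k j * u j` is a sum of independent centred Gaussians, hence has law
`N(0, 2‖u‖₂²)`, and distinct coordinates are functions of disjoint rows of `P`, hence independent.
So the mean of `∏ k, |e k| ^ (2/ℓ)` factors into `ℓ` absolute moments of order `p = 2/ℓ`. For
`X ~ N(0, 2d)` the Gaussian integral gives `E|X|^p = (4d)^(p/2) Γ((p+1)/2) / √π`, and the
reflection and duplication formulas for `Γ` turn `4^(p/2) Γ((p+1)/2) / √π` into the estimator's
constant `(2/π) Γ(p) Γ(1 - p/2) sin(πp/2)`. Each factor is thus `‖u‖₂^p` times that constant,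
and the product divided by the `ℓ`-th power of the constant is `‖u‖₂²`.
-/

open MeasureTheory ProbabilityTheory Finset Real

open scoped NNReal

lemma Real.two_div_pi_mul_Gamma_mul_Gamma_one_sub_mul_sin {s : ℝ} (hs : 0 < s) (hs1 : s < 1) :
    2 / π * Gamma (2 * s) * Gamma (1 - s) * sin (π * s) = 4 ^ s * Gamma (s + 1 / 2) / √π := by
  have hsin : sin (π * s) ≠ 0 :=
    (sin_pos_of_pos_of_lt_pi (by positivity) (by nlinarith [pi_pos])).ne'
  have h4 : (4 : ℝ) ^ s * 2 ^ (1 - 2 * s) = 2 := by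
    rw [show (4 : ℝ) = 2 ^ (2 : ℝ) by norm_num, ← rpow_mul zero_le_two, ← rpow_add two_pos]
    norm_num
  apply mul_left_cancel₀ (Gamma_pos_of_pos hs).ne'
  calc Gamma s * (2 / π * Gamma (2 * s) * Gamma (1 - s) * sin (π * s))
      = 2 / π * Gamma (2 * s) * (Gamma s * Gamma (1 - s) * sin (π * s)) := by ring
    _ = 2 * Gamma (2 * s) := by
      rw [Gamma_mul_Gamma_one_sub, div_mul_cancel₀ _ hsin]
      field_simp
    _ = 4 ^ s * (Gamma s * Gamma (s + 1 / 2)) / √π := by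
      rw [Gamma_mul_Gamma_add_half]
      field_simp
      exact h4.symm
    _ = Gamma s * (4 ^ s * Gamma (s + 1 / 2) / √π) := by ring

lemma integral_abs_rpow_mul_exp_neg_mul_sq {p b : ℝ} (hp : -1 < p) (hb : 0 < b) :
    ∫ x : ℝ, |x| ^ p * exp (-b * x ^ 2) = b ^ (-(p + 1) / 2) * Gamma ((p + 1) / 2) := by
  have h := integral_comp_abs (f := fun x ↦ x ^ p * exp (-b * x ^ 2))
  simp only [sq_abs] at h
  have h' := integral_rpow_mul_exp_neg_mul_rpow two_pos hp hb
  simp_rw [rpow_two] at h'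
  rw [h, h']
  ring

namespace ProbabilityTheory

lemma integral_abs_rpow_gaussianReal (v : ℝ≥0) {p : ℝ} (hp : 0 < p) :
    ∫ x, |x| ^ p ∂gaussianReal 0 v = (2 * v) ^ (p / 2) * Gamma ((p + 1) / 2) / √π := by
  rcases eq_or_ne v 0 with rfl | hv
  · simp [gaussianReal_zero_var, zero_rpow hp.ne', zero_rpow (half_pos hp).ne']
  have hv' : (0 : ℝ) < 2 * v := by positivity
  rw [integral_gaussianReal_eq_integral_smul hv]
  simp only [gaussianPDFReal, smul_eq_mul, sub_zero]
  have hdensity : ∀ x : ℝ, (√(2 * π * v))⁻¹ * rexp (-x ^ 2 / (2 * v)) * |x| ^ p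
      = (√π * √(2 * v))⁻¹ * (|x| ^ p * rexp (-(2 * v : ℝ)⁻¹ * x ^ 2)) := by
    intro x
    rw [← sqrt_mul pi_pos.le]
    ring_nf
  simp_rw [hdensity]
  rw [integral_const_mul, integral_abs_rpow_mul_exp_neg_mul_sq (by linarith) (inv_pos.2 hv'),
    inv_rpow hv'.le, ← rpow_neg hv'.le]
  field_simp
  rw [sqrt_eq_rpow, ← rpow_add hv']
  ring_nf

lemma integral_abs_rpow_gaussianReal_two_mul (d : ℝ≥0) {p : ℝ} (hp : 0 < p) (hp2 : p < 2) :
    ∫ x, |x| ^ p ∂gaussianReal 0 (2 * d)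
      = d ^ (p / 2) * (2 / π * Gamma p * Gamma (1 - p / 2) * sin (π * p / 2)) := by
  have h := two_div_pi_mul_Gamma_mul_Gamma_one_sub_mul_sin (s := p / 2) (by positivity)
    (by linarith)
  rw [mul_div_cancel₀ p two_ne_zero, ← mul_div_assoc] at h
  rw [integral_abs_rpow_gaussianReal _ hp, h, NNReal.coe_mul, NNReal.coe_two, ← mul_assoc,
    mul_rpow (by norm_num) d.coe_nonneg]
  norm_num
  ring_nf

lemma iIndepFun.map_sum_eq_gaussianReal {Ω ι : Type*} [MeasurableSpace Ω] {μ : Measure Ω}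
    {X : ι → Ω → ℝ} (hX : ∀ i, Measurable (X i)) (hindep : iIndepFun X μ)
    {m : ι → ℝ} {v : ι → ℝ≥0} (hlaw : ∀ i, μ.map (X i) = gaussianReal (m i) (v i))
    (s : Finset ι) :
    μ.map (∑ i ∈ s, X i) = gaussianReal (∑ i ∈ s, m i) (∑ i ∈ s, v i) := by
  have := hindep.isProbabilityMeasure
  classical
  induction s using Finset.induction with
  | empty =>
    rw [sum_empty, sum_empty, sum_empty, gaussianReal_zero_var]
    exact Measure.map_const μ (0 : ℝ) |>.trans (by simp)
  | insert i s hi ih =>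
    rw [sum_insert hi, sum_insert hi, sum_insert hi]
    exact gaussianReal_add_gaussianReal_of_indepFun
      (hindep.indepFun_finsetSum_of_notMem hX hi).symm (hlaw i) ih

lemma iIndepFun.map_sum_mul_eq_gaussianReal {Ω ι : Type*} [MeasurableSpace Ω] [Fintype ι]
    {μ : Measure Ω} {X : ι → Ω → ℝ} (hX : ∀ i, Measurable (X i)) (hindep : iIndepFun X μ)
    {v : ℝ≥0} (hlaw : ∀ i, μ.map (X i) = gaussianReal 0 v) (u : ι → ℝ) :
    μ.map (fun ω ↦ ∑ i, X i ω * u i) = gaussianReal 0 (v * (∑ i, u i ^ 2).toNNReal) := by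
  have hlaw_mul : ∀ i, μ.map (fun ω ↦ X i ω * u i)
      = gaussianReal 0 (.mk (u i ^ 2) (sq_nonneg _) * v) := by
    intro i
    change μ.map ((· * u i) ∘ X i) = _
    rw [← Measure.map_map (measurable_mul_const _) (hX i), hlaw, gaussianReal_map_mul_const,
      mul_zero]
  have h := (hindep.comp (fun i x ↦ x * u i) fun i ↦ measurable_mul_const _)
    |>.map_sum_eq_gaussianReal (fun i ↦ (hX i).mul_const _) hlaw_mul univ
  simp only [sum_const_zero] at h
  convert h using 2
  · ext ω; simp
  · ext; simp [Real.coe_toNNReal _ (sum_nonneg fun i _ ↦ sq_nonneg (u i)), mul_sum, mul_comm]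

lemma iIndepFun.curry {Ω ι κ 𝓧 : Type*} [MeasurableSpace Ω] [MeasurableSpace 𝓧]
    {μ : Measure Ω} {X : ι → κ → Ω → 𝓧} (hX : ∀ i j, Measurable (X i j))
    (hindep : iIndepFun (fun p : ι × κ ↦ X p.1 p.2) μ) :
    iIndepFun (fun i ω j ↦ X i j ω) μ := by
  have := hindep.isProbabilityMeasure
  have : ∀ i j, IsProbabilityMeasure (μ.map (X i j)) :=
    fun i j ↦ Measure.isProbabilityMeasure_map (hX i j).aemeasurable
  have hrow : ∀ i, iIndepFun (X i) μ := fun i ↦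
    hindep.precomp (g := fun j ↦ (i, j)) (Prod.mk_right_injective i)
  have hjoint : μ.map (fun ω (p : ι × κ) ↦ X p.1 p.2 ω)
      = Measure.infinitePi fun p ↦ μ.map (X p.1 p.2) :=
    hindep.map_fun_eq_infinitePi_map fun p ↦ hX p.1 p.2
  rw [iIndepFun_iff_map_fun_eq_infinitePi_map (by fun_prop)]
  simp_rw [(hrow _).map_fun_eq_infinitePi_map (hX _)]
  rw [← Measure.infinitePi_map_curry, ← hjoint, Measure.map_map (by fun_prop) (by fun_prop)]
  rfl

end ProbabilityTheory

/-- The normalising constant of the geometric-mean estimator: the absolute moment of order `2/ℓ`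
of the unit-scale `2`-stable law. -/
noncomputable def geometricMeanConst (ℓ : ℕ) : ℝ :=
  2 / π * Gamma (2 / ℓ) * Gamma (1 - 1 / ℓ) * sin (π / ℓ)

lemma geometricMeanConst_pos {ℓ : ℕ} (hℓ : 2 ≤ ℓ) : 0 < geometricMeanConst ℓ := by
  have hℓ' : (2 : ℝ) ≤ ℓ := by exact_mod_cast hℓ
  have : 1 / (ℓ : ℝ) < 1 := by rw [div_lt_one] <;> linarith
  have := Gamma_pos_of_pos (show 0 < 1 - 1 / (ℓ : ℝ) by linarith)
  have := sin_pos_of_pos_of_lt_pi (x := π / ℓ) (by positivity) (div_lt_self pi_pos (by linarith))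
  unfold geometricMeanConst
  positivity

lemma integral_abs_rpow_two_div_gaussianReal_two_mul (d : ℝ≥0) {ℓ : ℕ} (hℓ : 2 ≤ ℓ) :
    ∫ x, |x| ^ ((2 : ℝ) / ℓ) ∂gaussianReal 0 (2 * d)
      = d ^ (1 / (ℓ : ℝ)) * geometricMeanConst ℓ := by
  have hℓ' : (2 : ℝ) ≤ ℓ := by exact_mod_cast hℓ
  rw [integral_abs_rpow_gaussianReal_two_mul d (by positivity)
    ((div_lt_iff₀ (by positivity)).2 (by linarith)), geometricMeanConst,
    show (2 : ℝ) / ℓ / 2 = 1 / ℓ by ring, show π * (2 / ℓ) / 2 = π / ℓ by ring]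

theorem encode_decode_unbiased_general
    {Ω : Type*} [MeasurableSpace Ω] (μ : Measure Ω)
    (ℓ m : ℕ) (hℓ : 2 ≤ ℓ)
    (u : Fin m → ℝ)
    (P : Fin ℓ → Fin m → Ω → ℝ) (hP : ∀ k j, Measurable (P k j))
    (hindep : iIndepFun
      (fun p : Fin ℓ × Fin m => P p.1 p.2) μ)
    (hlaw : ∀ k j, μ.map (P k j) = gaussianReal 0 2)
    (e : Fin ℓ → Ω → ℝ) (he : ∀ k ω, e k ω = ∑ j, P k j ω * u j)
    (hhat : Ω → ℝ)
    (hhat_def : ∀ ω, hhat ω = (∏ k, |e k ω| ^ ((2 : ℝ) / ℓ))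
      / (2 / π * Real.Gamma (2 / ℓ) * Real.Gamma (1 - 1 / ℓ) * Real.sin (π / ℓ)) ^ ℓ) :
    ∫ ω, hhat ω ∂μ = ∑ j, (u j) ^ 2 := by
  set N := ∑ j, u j ^ 2
  have he_eq : e = fun k ω ↦ ∑ j, P k j ω * u j := funext fun k ↦ funext (he k)
  have he_meas : ∀ k, Measurable (e k) := by rw [he_eq]; fun_prop
  have hmoment : ∀ k,
      ∫ ω, |e k ω| ^ ((2 : ℝ) / ℓ) ∂μ = N ^ (1 / (ℓ : ℝ)) * geometricMeanConst ℓ := by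
    intro k
    have hlaw_e : μ.map (e k) = gaussianReal 0 (2 * N.toNNReal) := by
      rw [he_eq]
      exact (hindep.precomp (Prod.mk_right_injective k)).map_sum_mul_eq_gaussianReal (hP k)
        (hlaw k) u
    rw [← integral_map (f := fun x ↦ |x| ^ ((2 : ℝ) / ℓ)) (he_meas k).aemeasurable
      (Measurable.aestronglyMeasurable (by fun_prop)), hlaw_e,
      integral_abs_rpow_two_div_gaussianReal_two_mul _ hℓ, Real.coe_toNNReal _ (by positivity)]
  have hindep_abs : iIndepFun (fun k ω ↦ |e k ω| ^ ((2 : ℝ) / ℓ)) μ := by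
    rw [he_eq]
    exact (hindep.curry hP).comp (fun k y ↦ |∑ j, y j * u j| ^ ((2 : ℝ) / ℓ)) (by fun_prop)
  calc ∫ ω, hhat ω ∂μ
      = (∫ ω, ∏ k, |e k ω| ^ ((2 : ℝ) / ℓ) ∂μ) / geometricMeanConst ℓ ^ ℓ := by
        simp_rw [hhat_def]; exact integral_div _ _
    _ = (N ^ (1 / (ℓ : ℝ)) * geometricMeanConst ℓ) ^ ℓ / geometricMeanConst ℓ ^ ℓ := by
        rw [hindep_abs.integral_fun_prod_eq_prod_integral
          fun k ↦ Measurable.aestronglyMeasurable (by fun_prop)]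
        simp [hmoment]
    _ = N := by
        rw [mul_pow, ← rpow_natCast, ← rpow_mul (by positivity),
          one_div_mul_cancel (by positivity), rpow_one,
          mul_div_cancel_right₀ _ (pow_pos (geometricMeanConst_pos hℓ) ℓ).ne']

/-- End-to-end correctness in expectation of the Encode–Decode pipeline of
Fed-χ²: with i.i.d. unit-scale 2-stable projection entries, the geometric mean
estimator applied to the encoding `e k = ∑ j, P k j * u j` is an unbiased
estimator of `‖u‖₂²`. -/
theorem encode_decode_unbiased
    {Ω : Type*} [MeasurableSpace Ω] (μ : Measure Ω) [IsProbabilityMeasure μ]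
    (ℓ m : ℕ) (hℓ : 2 ≤ ℓ) (hm : 1 ≤ m)
    (u : Fin m → ℝ) (hu : u ≠ 0)
    (P : Fin ℓ → Fin m → Ω → ℝ) (hP : ∀ k j, Measurable (P k j))
    (hindep : iIndepFun
      (fun p : Fin ℓ × Fin m => P p.1 p.2) μ)
    (hlaw : ∀ k j, μ.map (P k j) = gaussianReal 0 2)
    (e : Fin ℓ → Ω → ℝ) (he : ∀ k ω, e k ω = ∑ j, P k j ω * u j)
    (hhat : Ω → ℝ)
    (hhat_def : ∀ ω, hhat ω = (∏ k, |e k ω| ^ ((2 : ℝ) / ℓ))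
      / (2 / π * Real.Gamma (2 / ℓ) * Real.Gamma (1 - 1 / ℓ) * Real.sin (π / ℓ)) ^ ℓ) :
    ∫ ω, hhat ω ∂μ = ∑ j, (u j) ^ 2 :=
  encode_decode_unbiased_general μ ℓ m hℓ u P hP hindep hlaw e he hhat hhat_def
end

section
/- Let ℓ ≥ 2 be an integer, s > 0 and ε > 0 real numbers. Let e₁, …, e_ℓ be independent real-valued random variables, each distributed according to the Gaussian measure with mean 0 and variance 2s (the 2-stable distribution with scale s). Let ŝ := ( ∏_{k=1}^{ℓ} |e_k|^{2/ℓ} ) / ( (2/π) Γ(2/ℓ) Γ(1 − 1/ℓ) sin(π/ℓ) )^{ℓ}. Set C₁ := (2/π)·arctan( log(1+ε)/π ) and t_R := C₁·log(1+ε) − C₁·γ − log( (2/π) · Γ(2C₁) · Γ(1 − C₁) · sin(πC₁) ), where γ is the Euler–Mascheroni constant. Then P( ŝ − s > ε·s ) ≤ exp( −ℓ · t_R ). -/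
open MeasureTheory ProbabilityTheory Finset Real
open scoped ENNReal NNReal

/-!
Markov's inequality is applied to `∏ₖ |eₖ|^(2C₁)`, the `ℓC₁`-th power of the product in the
estimator. By independence its expectation is `(s^C₁ 𝔼|S|^(2C₁))^ℓ`, where `S ~ N(0, 2)` is the
standard 2-stable variable, and `𝔼|S|^p = 2^p Γ((p+1)/2)/√π` is, by the reflection and
duplication formulas, the Gamma–sine constant of the statement. The normalising constant of the
estimator is `𝔼|S|^(2/ℓ)`; log-convexity of `Γ` bounds its `ℓ`-th power below by `e^(-γ)`,
which is where the Euler–Mascheroni constant enters.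
-/

/-- `𝔼|S|^p` for `S ~ N(0, 2)`, the standard symmetric 2-stable law. -/
noncomputable def twoStableAbsMoment (p : ℝ) : ℝ := 2 ^ p * Gamma ((p + 1) / 2) / √π

lemma twoStableAbsMoment_pos {p : ℝ} (hp : -1 < p) : 0 < twoStableAbsMoment p := by
  have := Gamma_pos_of_pos (show 0 < (p + 1) / 2 by linarith)
  unfold twoStableAbsMoment
  positivity

lemma two_div_pi_mul_Gamma_mul_Gamma_mul_sin {x : ℝ} (hx₀ : 0 < x) (hx₁ : x < 1) :
    2 / π * Gamma (2 * x) * Gamma (1 - x) * sin (π * x) = twoStableAbsMoment (2 * x) := by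
  have hsin : 0 < sin (π * x) := sin_pos_of_pos_of_lt_pi (by positivity) (by nlinarith [pi_pos])
  have hreflection : Gamma x * Gamma (1 - x) * sin (π * x) = π := by
    rw [Gamma_mul_Gamma_one_sub, div_mul_cancel₀ _ hsin.ne']
  have hduplication := Gamma_mul_Gamma_add_half x
  have htwo : (2 : ℝ) ^ (2 * x) * 2 ^ (1 - 2 * x) = 2 := by
    rw [← rpow_add two_pos]; norm_num
  refine mul_left_cancel₀ (Gamma_pos_of_pos hx₀).ne' ?_
  calc Gamma x * (2 / π * Gamma (2 * x) * Gamma (1 - x) * sin (π * x))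
      = 2 / π * Gamma (2 * x) * (Gamma x * Gamma (1 - x) * sin (π * x)) := by ring
    _ = 2 ^ (2 * x) * 2 ^ (1 - 2 * x) * Gamma (2 * x) := by
      rw [hreflection, htwo]; field_simp
    _ = Gamma x * twoStableAbsMoment (2 * x) := by
      rw [twoStableAbsMoment, show (2 * x + 1) / 2 = x + 1 / 2 by ring, mul_div_assoc',
        ← mul_assoc, mul_comm (Gamma x), mul_assoc _ (Gamma x), hduplication]
      field_simp

lemma hasDerivAt_log_Gamma_one_half :
    HasDerivAt (log ∘ Gamma) (-(eulerMascheroniConstant + 2 * log 2)) (1 / 2) := by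
  have h := hasDerivAt_Gamma_one_half.log (by rw [Gamma_one_half_eq]; positivity)
  rwa [Gamma_one_half_eq, neg_mul, neg_div, mul_div_cancel_left₀ _ (sqrt_pos.2 pi_pos).ne'] at h

/-- The tangent line of the convex function `log ∘ Γ` at `1/2`. -/
lemma exp_neg_mul_le_twoStableAbsMoment {p : ℝ} (hp : 0 < p) :
    exp (-(eulerMascheroniConstant * p / 2)) ≤ twoStableAbsMoment p := by
  have htangent := convexOn_log_Gamma.le_slope_of_hasDerivAt (x := 1 / 2) (y := (p + 1) / 2)
    (by norm_num) (Set.mem_Ioi.2 (by linarith)) (by linarith) hasDerivAt_log_Gamma_one_half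
  rw [slope_def_field, show (p + 1) / 2 - 1 / 2 = p / 2 by ring, le_div_iff₀ (by positivity),
    Function.comp_apply, Function.comp_apply, Gamma_one_half_eq] at htangent
  rw [← le_log_iff_exp_le (twoStableAbsMoment_pos (by linarith)), twoStableAbsMoment,
    log_div (by positivity) (sqrt_pos.2 pi_pos).ne',
    log_mul (by positivity) (Gamma_pos_of_pos (by linarith)).ne', log_rpow two_pos]
  linarith

lemma integral_abs_rpow_gaussianReal {v : ℝ≥0} (hv : v ≠ 0) {p : ℝ} (hp : -1 < p) :
    ∫ y, |y| ^ p ∂gaussianReal 0 v = (2 * v) ^ (p / 2) * Gamma ((p + 1) / 2) / √π := by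
  have hb : (0 : ℝ) < (2 * (v : ℝ))⁻¹ := by positivity
  have hpdf : ∀ y : ℝ, gaussianPDFReal 0 v y • |y| ^ p
      = (√(2 * π * v))⁻¹ * (|y| ^ p * exp (-(2 * v : ℝ)⁻¹ * |y| ^ (2 : ℝ))) := by
    intro y
    rw [gaussianPDFReal, smul_eq_mul, sub_zero, rpow_two, sq_abs]
    field_simp
  simp_rw [integral_gaussianReal_eq_integral_smul hv, hpdf, integral_const_mul]
  rw [integral_comp_abs (f := fun t ↦ t ^ p * exp (-(2 * v : ℝ)⁻¹ * t ^ (2 : ℝ))),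
    integral_rpow_mul_exp_neg_mul_rpow two_pos hp hb]
  have hsplit : (2 * v : ℝ) ^ ((p + 1) / 2) = (2 * v) ^ (p / 2) * √(2 * v) := by
    rw [sqrt_eq_rpow, ← rpow_add (by positivity)]
    ring_nf
  rw [inv_rpow (by positivity), ← rpow_neg (by positivity), neg_div, neg_neg, hsplit,
    show (2 * π * v : ℝ) = π * (2 * v) by ring, sqrt_mul pi_pos.le]
  field_simp

lemma lintegral_abs_rpow_gaussianReal {v : ℝ≥0} (hv : v ≠ 0) {p : ℝ} (hp : 0 < p) :
    ∫⁻ y, ENNReal.ofReal (|y| ^ p) ∂gaussianReal 0 v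
      = ENNReal.ofReal ((2 * v) ^ (p / 2) * Gamma ((p + 1) / 2) / √π) := by
  have hint : Integrable (fun y : ℝ ↦ |y| ^ p) (gaussianReal 0 v) := by
    simpa [hp.le] using (memLp_id_gaussianReal (μ := 0) (v := v) p.toNNReal).integrable_norm_rpow'
  rw [← integral_abs_rpow_gaussianReal hv (by linarith),
    ofReal_integral_eq_lintegral_ofReal hint (ae_of_all _ fun y ↦ by positivity)]

lemma lintegral_abs_rpow_gaussianReal_two_mul {s : ℝ} (hs : 0 < s) {p : ℝ} (hp : 0 < p) :
    ∫⁻ y, ENNReal.ofReal (|y| ^ p) ∂gaussianReal 0 (2 * s).toNNReal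
      = ENNReal.ofReal (s ^ (p / 2) * twoStableAbsMoment p) := by
  rw [lintegral_abs_rpow_gaussianReal (by simpa using hs) hp, Real.coe_toNNReal _ (by positivity),
    twoStableAbsMoment, show 2 * (2 * s) = 2 ^ (2 : ℝ) * s by norm_num; ring,
    mul_rpow (by positivity) hs.le, ← rpow_mul zero_le_two, mul_div_cancel₀ p two_ne_zero]
  ring_nf

lemma measure_lt_prod_le_prod_lintegral_rpow_div {Ω ι : Type*} [MeasurableSpace Ω]
    {μ : Measure Ω} [Fintype ι] {f : ι → Ω → ℝ} (hf : ∀ i, Measurable (f i))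
    (hf₀ : ∀ i ω, 0 ≤ f i ω) (hindep : iIndepFun f μ) {b θ : ℝ} (hb : 0 < b) (hθ : 0 < θ) :
    μ {ω | b < ∏ i, f i ω}
      ≤ (∏ i, ∫⁻ ω, ENNReal.ofReal (f i ω ^ θ) ∂μ) / ENNReal.ofReal (b ^ θ) := by
  set g : ι → Ω → ℝ≥0∞ := fun i ω ↦ ENNReal.ofReal (f i ω ^ θ)
  have hg : ∀ i, Measurable (g i) := fun i ↦ ((hf i).pow_const θ).ennreal_ofReal
  have hevent : {ω | b < ∏ i, f i ω} ⊆ {ω | ENNReal.ofReal (b ^ θ) ≤ ∏ i, g i ω} := by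
    intro ω (hω : b < ∏ i, f i ω)
    show ENNReal.ofReal (b ^ θ) ≤ ∏ i, ENNReal.ofReal (f i ω ^ θ)
    rw [← ENNReal.ofReal_prod_of_nonneg fun i _ ↦ rpow_nonneg (hf₀ i ω) θ,
      finsetProd_rpow _ _ fun i _ ↦ hf₀ i ω]
    exact ENNReal.ofReal_le_ofReal (rpow_le_rpow hb.le hω.le hθ.le)
  calc μ {ω | b < ∏ i, f i ω}
      ≤ (∫⁻ ω, ∏ i, g i ω ∂μ) / ENNReal.ofReal (b ^ θ) :=
        (measure_mono hevent).trans <| meas_ge_le_lintegral_div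
          (Finset.univ.measurable_prod fun i _ ↦ hg i).aemeasurable
          (by simpa using rpow_pos_of_pos hb θ) ENNReal.ofReal_ne_top
    _ = (∏ i, ∫⁻ ω, g i ω ∂μ) / ENNReal.ofReal (b ^ θ) := by
        rw [lintegral_prod_eq_prod_lintegral_of_indepFun univ g
          (hindep.comp (fun _ x ↦ ENNReal.ofReal (x ^ θ)) fun _ ↦ by fun_prop) hg]

lemma two_div_pi_mul_arctan_mem_Ioo {x : ℝ} (hx : 0 < x) : 2 / π * arctan x ∈ Set.Ioo 0 1 := by
  have harctan : 0 < arctan x := by simpa using arctan_strictMono hx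
  refine ⟨by positivity, ?_⟩
  rw [div_mul_eq_mul_div, div_lt_one pi_pos]
  linarith [arctan_lt_pi_div_two x]

lemma exp_neg_eulerMascheroniConstant_le_twoStableAbsMoment_two_div_pow {n : ℕ} (hn : 0 < n) :
    exp (-eulerMascheroniConstant) ≤ twoStableAbsMoment (2 / n) ^ n := by
  calc exp (-eulerMascheroniConstant)
      = exp (-(eulerMascheroniConstant * (2 / n) / 2)) ^ n := by
        rw [← exp_nat_mul]; congr 1; field_simp
    _ ≤ _ := pow_le_pow_left₀ (exp_pos _).le
        (exp_neg_mul_le_twoStableAbsMoment (by positivity)) n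

lemma rpow_mul_pow_div_rpow_eq_exp {s a c : ℝ} (hs : 0 < s) (ha : 0 < a) (hc : 0 < c)
    (g x : ℝ) (n : ℕ) :
    (s ^ x * a) ^ n / (c * s * exp (-g)) ^ (n * x) = exp (-n * (x * log c - x * g - log a)) := by
  refine (exp_log (by positivity)).symm.trans (congrArg exp ?_)
  rw [log_div (by positivity) (by positivity), log_pow, log_mul (by positivity) ha.ne',
    log_rpow hs, log_rpow (by positivity), log_mul (by positivity) (exp_pos _).ne',
    log_mul hc.ne' hs.ne', log_exp]
  ring

theorem geometric_mean_estimator_right_tail_general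
    {Ω : Type*} [MeasurableSpace Ω] (μ : Measure Ω)
    (ℓ : ℕ) (hℓ : 2 ≤ ℓ) (s ε : ℝ) (hs : 0 < s) (hε : 0 < ε)
    (e : Fin ℓ → Ω → ℝ) (he : ∀ k, Measurable (e k))
    (hindep : iIndepFun e μ)
    (hlaw : ∀ k, μ.map (e k) = gaussianReal 0 ((2 * s : ℝ).toNNReal))
    (shat : Ω → ℝ)
    (hshat : ∀ ω, shat ω = (∏ k, |e k ω| ^ ((2 : ℝ) / ℓ))
      / (2 / π * Real.Gamma (2 / ℓ) * Real.Gamma (1 - 1 / ℓ) * Real.sin (π / ℓ)) ^ ℓ)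
    (C₁ tR : ℝ)
    (hC₁ : C₁ = 2 / π * Real.arctan (Real.log (1 + ε) / π))
    (htR : tR = C₁ * Real.log (1 + ε) - C₁ * Real.eulerMascheroniConstant
      - Real.log (2 / π * Real.Gamma (2 * C₁) * Real.Gamma (1 - C₁) * Real.sin (π * C₁))) :
    μ {ω | shat ω - s > ε * s} ≤ ENNReal.ofReal (Real.exp (-(ℓ : ℝ) * tR)) := by
  obtain ⟨hC₁₀, hC₁₁⟩ : 0 < C₁ ∧ C₁ < 1 :=
    hC₁ ▸ two_div_pi_mul_arctan_mem_Ioo (div_pos (log_pos (by linarith)) pi_pos)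
  have hℓ₀ : 0 < ℓ := by omega
  have hD := two_div_pi_mul_Gamma_mul_Gamma_mul_sin (x := 1 / ℓ) (by positivity)
    ((div_lt_one (by positivity)).2 (by exact_mod_cast hℓ))
  have hDℓ := exp_neg_eulerMascheroniConstant_le_twoStableAbsMoment_two_div_pow hℓ₀
  simp only [mul_one_div] at hD
  set b := (1 + ε) * s * exp (-eulerMascheroniConstant)
  have hevent : {ω | shat ω - s > ε * s} ⊆ {ω | b < ∏ k, |e k ω| ^ ((2 : ℝ) / ℓ)} := by
    intro ω (hω : shat ω - s > ε * s)
    rw [hshat, hD, gt_iff_lt, lt_sub_iff_add_lt, lt_div_iff₀ ((exp_pos _).trans_le hDℓ)] at hω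
    exact (mul_le_mul_of_nonneg_left hDℓ (by positivity)).trans_lt (by linarith)
  have hmoment : ∀ k, ∫⁻ ω, ENNReal.ofReal ((|e k ω| ^ ((2 : ℝ) / ℓ)) ^ (ℓ * C₁)) ∂μ
      = ENNReal.ofReal (s ^ C₁ * twoStableAbsMoment (2 * C₁)) := by
    intro k
    simp_rw [← rpow_mul (abs_nonneg _), show 2 / ℓ * (ℓ * C₁) = 2 * C₁ by field_simp]
    rw [← lintegral_map (f := fun y ↦ ENNReal.ofReal (|y| ^ (2 * C₁))) (by fun_prop) (he k),
      hlaw k, lintegral_abs_rpow_gaussianReal_two_mul hs (by positivity),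
      mul_div_cancel_left₀ C₁ two_ne_zero]
  have hM₀ : 0 < twoStableAbsMoment (2 * C₁) := twoStableAbsMoment_pos (by linarith)
  calc μ {ω | shat ω - s > ε * s}
      ≤ μ {ω | b < ∏ k, |e k ω| ^ ((2 : ℝ) / ℓ)} := measure_mono hevent
    _ ≤ (∏ k, ∫⁻ ω, ENNReal.ofReal ((|e k ω| ^ ((2 : ℝ) / ℓ)) ^ (ℓ * C₁)) ∂μ)
        / ENNReal.ofReal (b ^ (ℓ * C₁)) :=
      measure_lt_prod_le_prod_lintegral_rpow_div (fun k ↦ (he k).abs.pow_const _)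
        (fun _ _ ↦ by positivity) (hindep.comp _ fun _ ↦ measurable_abs.pow_const _)
        (by positivity) (by positivity)
    _ = ENNReal.ofReal ((s ^ C₁ * twoStableAbsMoment (2 * C₁)) ^ ℓ / b ^ (ℓ * C₁)) := by
      rw [Fintype.prod_congr _ _ hmoment, prod_const, card_univ, Fintype.card_fin,
        ← ENNReal.ofReal_pow (by positivity), ← ENNReal.ofReal_div_of_pos (by positivity)]
    _ = ENNReal.ofReal (exp (-ℓ * tR)) := by
      rw [rpow_mul_pow_div_rpow_eq_exp hs hM₀ (by linarith), htR,
        two_div_pi_mul_Gamma_mul_Gamma_mul_sin hC₁₀ hC₁₁]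

/-- Right tail bound of the geometric mean estimator (Lemma 3 of the paper,
specialized to α = 2): `P(ŝ − s > ε·s) ≤ exp(−ℓ·t_R)`. -/
theorem geometric_mean_estimator_right_tail
    {Ω : Type*} [MeasurableSpace Ω] (μ : Measure Ω) [IsProbabilityMeasure μ]
    (ℓ : ℕ) (hℓ : 2 ≤ ℓ) (s ε : ℝ) (hs : 0 < s) (hε : 0 < ε)
    (e : Fin ℓ → Ω → ℝ) (he : ∀ k, Measurable (e k))
    (hindep : iIndepFun e μ)
    (hlaw : ∀ k, μ.map (e k) = gaussianReal 0 ((2 * s : ℝ).toNNReal))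
    (shat : Ω → ℝ)
    (hshat : ∀ ω, shat ω = (∏ k, |e k ω| ^ ((2 : ℝ) / ℓ))
      / (2 / π * Real.Gamma (2 / ℓ) * Real.Gamma (1 - 1 / ℓ) * Real.sin (π / ℓ)) ^ ℓ)
    (C₁ tR : ℝ)
    (hC₁ : C₁ = 2 / π * Real.arctan (Real.log (1 + ε) / π))
    (htR : tR = C₁ * Real.log (1 + ε) - C₁ * Real.eulerMascheroniConstant
      - Real.log (2 / π * Real.Gamma (2 * C₁) * Real.Gamma (1 - C₁) * Real.sin (π * C₁))) :
    μ {ω | shat ω - s > ε * s} ≤ ENNReal.ofReal (Real.exp (-(ℓ : ℝ) * tR)) :=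
  geometric_mean_estimator_right_tail_general μ ℓ hℓ s ε hs hε e he hindep hlaw shat hshat C₁ tR hC₁
    htR
end
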